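/- Bressoud's first identity: for all n ≥ 0, Σ_{k=0}^n q^{k²} [n choose k]_q = Σ_{j∈ℤ} (−1)^j q^{j(5j−1)/2} [2n choose n−2j]_q. -/

import Mathlib

/-!
Write `a n = ∑ₖ q^(k²) [n, k]`, `b n = ∑ₖ q^(k²+k) [n, k]`, and `A n`, `B n` for the right-hand
sides of Bressoud's two identities, `∑ⱼ (-1)^j q^(j(5j-1)/2) [2n, n-2j]` and
`∑ⱼ (-1)^j q^(j(5j+3)/2) [2n+1, n-2j]`. Both pairs start at `1` and satisfy
`a (n+1) = a n + q^(n+1) b n` and `b (n+1) = q^(n+1) a (n+1) + (1 - q^(n+1)) b n`, so they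
coincide. For `a, b` this is the two q-Pascal rules and a shift of the summation index. For `A, B`
one applies the q-Pascal rules twice and uses the symmetry `[m, k] = [m, m - k]`: one leftover sum
is odd under `j ↦ 1 - j`, hence zero, and the other becomes `-q^(n+1) B n` under `j ↦ -1 - j`.
-/

open LaurentPolynomial

/-- The Gaussian (q-)binomial coefficient `[n choose k]_q`, as a Laurent polynomial in `q`,
with the convention that it vanishes for `k < 0` or `k > n`.  Defined via the standard
Pascal-type recurrence `[n+1, k] = q^k [n, k] + [n, k-1]`. -/
noncomputable def qb : ℕ → ℤ → LaurentPolynomial ℤ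
  | 0, k => if k = 0 then 1 else 0
  | (n+1), k => T k * qb n k + qb n (k-1)

/-- The variable `q`. -/
noncomputable def q : LaurentPolynomial ℤ := T 1

open Function

lemma qb_succ (m : ℕ) (k : ℤ) : qb (m + 1) k = T k * qb m k + qb m (k - 1) := rfl

lemma qb_eq_zero : ∀ {m : ℕ} {k : ℤ}, k < 0 ∨ (m : ℤ) < k → qb m k = 0
  | 0, k, h => if_neg (by omega)
  | m + 1, k, h => by
    rw [qb_succ, qb_eq_zero (by omega), qb_eq_zero (by omega), mul_zero, add_zero]

lemma qb_succ' : ∀ (m : ℕ) (k : ℤ), qb (m + 1) k = qb m k + T (m + 1 - k) * qb m (k - 1)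
  | 0, k => by
    by_cases h₀ : k = 0
    · simp [qb, h₀]
    by_cases h₁ : k = 1
    · simp [qb, h₁]
    · simp [qb, h₀, h₁, sub_eq_zero]
  | m + 1, k => by
    have ih₁ := qb_succ' m k
    have ih₂ := qb_succ' m (k - 1)
    rw [qb_succ] at ih₁ ih₂
    have hT : (T k * T (m + 1 - k) : LaurentPolynomial ℤ) = T (m + 1 + 1 - k) * T (k - 1) := by
      rw [← T_add, ← T_add]; ring_nf
    rw [qb_succ (m + 1), qb_succ m, qb_succ m]
    push_cast
    rw [show (m : ℤ) + 1 - (k - 1) = m + 1 + 1 - k by ring] at ih₂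
    linear_combination T k * ih₁ + ih₂ + qb m (k - 1) * hT

lemma qb_symm : ∀ (m : ℕ) (k : ℤ), qb m k = qb m (m - k)
  | 0, k => by by_cases h : k = 0 <;> simp [qb, h]
  | m + 1, k => by
    rw [qb_succ, qb_succ', qb_symm m k, qb_symm m (k - 1)]
    push_cast
    rw [show (m : ℤ) + 1 - (m + 1 - k) = k by ring, show (m : ℤ) - (k - 1) = m + 1 - k by ring,
      show (m : ℤ) + 1 - k - 1 = m - k by ring, add_comm]

lemma qb_hasFiniteSupport (m : ℕ) : HasFiniteSupport (qb m) :=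
  (Set.finite_Icc 0 (m : ℤ)).subset fun k hk => by
    by_contra h
    exact hk (qb_eq_zero (by rw [Set.mem_Icc] at h; omega))

lemma LaurentPolynomial.eq_zero_of_eq_neg {R : Type*} [Ring R] [IsAddTorsionFree R]
    {p : R[T;T⁻¹]} (h : p = -p) : p = 0 := by
  ext a
  have h' : p.coeff a = -p.coeff a := congrArg (·.coeff a) h
  rw [eq_neg_iff_add_eq_zero, ← two_nsmul, two_nsmul_eq_zero] at h'
  simpa using h'

noncomputable def progSum (m : ℕ) (w : ℤ → LaurentPolynomial ℤ) (c d : ℤ) : LaurentPolynomial ℤ :=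
  ∑ᶠ j, w j * qb m (c - d * j)

section progSum

variable {m : ℕ} {w w' : ℤ → LaurentPolynomial ℤ} {c c' d : ℤ}

lemma hasFiniteSupport_mul_qb (hd : d ≠ 0) : HasFiniteSupport fun j => w j * qb m (c - d * j) :=
  ((qb_hasFiniteSupport m).fun_comp_of_injective fun _ _ h =>
    mul_left_cancel₀ hd (sub_right_injective h)).fun_mul_right w

lemma progSum_congr (hw : ∀ j, w j = w' j) (hc : c = c') :
    progSum m w c d = progSum m w' c' d := by
  rw [funext hw, hc]

lemma progSum_eq_single (j₀ : ℤ) (h : ∀ j ≠ j₀, qb m (c - d * j) = 0) :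
    progSum m w c d = w j₀ * qb m (c - d * j₀) :=
  finsum_eq_single _ j₀ fun j hj => by rw [h j hj, mul_zero]

lemma progSum_neg : progSum m (fun j => -w j) c d = -progSum m w c d := by
  simp only [progSum, neg_mul, finsum_neg_distrib]

lemma mul_progSum (a : LaurentPolynomial ℤ) :
    a * progSum m w c d = progSum m (fun j => a * w j) c d := by
  simp only [progSum, mul_finsum, mul_assoc]

lemma progSum_succ (hd : d ≠ 0) :
    progSum (m + 1) w c d
      = progSum m (fun j => w j * T (c - d * j)) c d + progSum m w (c - 1) d := by
  rw [progSum, progSum, progSum, ← finsum_add_distrib (hasFiniteSupport_mul_qb hd)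
    (hasFiniteSupport_mul_qb hd)]
  refine finsum_congr fun j => ?_
  rw [qb_succ, sub_right_comm]
  ring

lemma progSum_succ' (hd : d ≠ 0) :
    progSum (m + 1) w c d
      = progSum m w c d + progSum m (fun j => w j * T (m + 1 - (c - d * j))) (c - 1) d := by
  rw [progSum, progSum, progSum, ← finsum_add_distrib (hasFiniteSupport_mul_qb hd)
    (hasFiniteSupport_mul_qb hd)]
  refine finsum_congr fun j => ?_
  rw [qb_succ', sub_right_comm]
  ring

lemma progSum_shift (t : ℤ) (h : c' = c - d * t) :
    progSum m w c d = progSum m (fun i => w (i + t)) c' d := by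
  rw [progSum, progSum, ← finsum_comp_equiv (Equiv.addRight t)]
  refine finsum_congr fun i => ?_
  rw [Equiv.coe_addRight, h]
  ring_nf

lemma progSum_reflect (s : ℤ) (h : c' = m - c + d * s) :
    progSum m w c d = progSum m (fun i => w (s - i)) c' d := by
  rw [progSum, progSum, ← finsum_comp_equiv (Equiv.subLeft s)]
  refine finsum_congr fun i => ?_
  rw [Equiv.subLeft_apply, qb_symm, h]
  ring_nf

lemma progSum_eq_zero_of_antisymm (s : ℤ) (hc : c = m - c + d * s)
    (hw : ∀ i, w (s - i) = -w i) : progSum m w c d = 0 := by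
  have h := progSum_reflect s hc (w := w)
  simp only [hw, progSum_neg] at h
  exact LaurentPolynomial.eq_zero_of_eq_neg h

end progSum

structure IsRRPair {R : Type*} [Ring R] (x a b : ℕ → R) : Prop where
  zero_left : a 0 = 1
  zero_right : b 0 = 1
  succ_left (n : ℕ) : a (n + 1) = a n + x n * b n
  succ_right (n : ℕ) : b (n + 1) = x n * a (n + 1) + (1 - x n) * b n

theorem IsRRPair.unique {R : Type*} [Ring R] {x a b a' b' : ℕ → R} (h : IsRRPair x a b)
    (h' : IsRRPair x a' b') : a = a' ∧ b = b' := by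
  have key : ∀ n, a n = a' n ∧ b n = b' n := by
    intro n
    induction n with
    | zero => exact ⟨h.zero_left.trans h'.zero_left.symm, h.zero_right.trans h'.zero_right.symm⟩
    | succ n ih =>
      have ha : a (n + 1) = a' (n + 1) := by rw [h.succ_left, h'.succ_left, ih.1, ih.2]
      exact ⟨ha, by rw [h.succ_right, h'.succ_right, ha, ih.2]⟩
  exact ⟨funext fun n => (key n).1, funext fun n => (key n).2⟩

lemma neg_one_pow_natAbs_sub_of_odd {R : Type*} [Ring R] {s : ℤ} (hs : Odd s) (i : ℤ) :
    (-1 : R) ^ (s - i).natAbs = -(-1) ^ i.natAbs := by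
  simp only [← Int.coe_negOnePow, Int.negOnePow_sub, Int.negOnePow_odd _ hs]
  simp

def bressoudExp (j : ℤ) : ℤ := j * (5 * j - 1) / 2

lemma bressoudExp_one_sub (j : ℤ) : bressoudExp (1 - j) = bressoudExp j + 2 - 4 * j := by
  rw [bressoudExp, bressoudExp,
    show (1 - j) * (5 * (1 - j) - 1) = j * (5 * j - 1) + (2 - 4 * j) * 2 by ring,
    Int.add_mul_ediv_right _ _ two_ne_zero]
  ring

lemma bressoudExp_neg_one_sub (j : ℤ) : bressoudExp (-1 - j) = bressoudExp j + 3 + 6 * j := by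
  rw [bressoudExp, bressoudExp,
    show (-1 - j) * (5 * (-1 - j) - 1) = j * (5 * j - 1) + (3 + 6 * j) * 2 by ring,
    Int.add_mul_ediv_right _ _ two_ne_zero]
  ring

noncomputable def rrPoly₁ (n : ℕ) : LaurentPolynomial ℤ := progSum n (fun k => T (k ^ 2)) 0 (-1)

noncomputable def rrPoly₂ (n : ℕ) : LaurentPolynomial ℤ :=
  progSum n (fun k => T (k ^ 2 + k)) 0 (-1)

noncomputable def bressoudPoly₁ (n : ℕ) : LaurentPolynomial ℤ :=
  progSum (2 * n) (fun j => (-1) ^ j.natAbs * T (bressoudExp j)) n 2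

-- `bressoudExp j + 2 * j = j * (5 * j + 3) / 2`
noncomputable def bressoudPoly₂ (n : ℕ) : LaurentPolynomial ℤ :=
  progSum (2 * n + 1) (fun j => (-1) ^ j.natAbs * T (bressoudExp j + 2 * j)) n 2

theorem isRRPair_rrPoly : IsRRPair (fun n => T (n + 1)) rrPoly₁ rrPoly₂ where
  zero_left := by
    rw [rrPoly₁, progSum_eq_single 0 fun j hj => qb_eq_zero (by omega)]
    simp [qb]
  zero_right := by
    rw [rrPoly₂, progSum_eq_single 0 fun j hj => qb_eq_zero (by omega)]
    simp [qb]
  succ_left n := by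
    rw [rrPoly₁, progSum_succ' (by norm_num), progSum_shift 1 (c := 0 - 1) (c' := 0) (by ring),
      rrPoly₂, mul_progSum]
    congr 1
    refine progSum_congr (fun k => ?_) rfl
    simp only [← T_add]
    ring_nf
  succ_right n := by
    set H := progSum n (fun k => T ((k + 1) ^ 2)) 0 (-1)
    have h₁ : rrPoly₁ (n + 1) = rrPoly₂ n + H := by
      rw [rrPoly₁, progSum_succ (by norm_num), progSum_shift 1 (c := 0 - 1) (c' := 0) (by ring)]
      congr 1
      refine progSum_congr (fun k => ?_) rfl
      simp only [← T_add]
      ring_nf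
    have h₂ : rrPoly₂ (n + 1) = rrPoly₂ n + T (n + 1) * H := by
      rw [rrPoly₂, progSum_succ' (by norm_num), progSum_shift 1 (c := 0 - 1) (c' := 0) (by ring),
        mul_progSum]
      congr 1
      refine progSum_congr (fun k => ?_) rfl
      simp only [← T_add]
      ring_nf
    rw [h₁, h₂]
    ring

theorem isRRPair_bressoudPoly : IsRRPair (fun n => T (n + 1)) bressoudPoly₁ bressoudPoly₂ where
  zero_left := by
    rw [bressoudPoly₁, progSum_eq_single 0 fun j hj => qb_eq_zero (by omega)]
    simp [qb, bressoudExp]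
  zero_right := by
    rw [bressoudPoly₂, progSum_eq_single 0 fun j hj => qb_eq_zero (by omega)]
    simp [qb, bressoudExp]
  succ_left n := by
    have hZ : progSum (2 * n) (fun j => (-1) ^ j.natAbs * T (bressoudExp j) * T (↑(n + 1) - 2 * j))
        ↑(n + 1) 2 = 0 := by
      refine progSum_eq_zero_of_antisymm 1 (by push_cast; ring) fun i => ?_
      rw [neg_one_pow_natAbs_sub_of_odd odd_one, bressoudExp_one_sub]
      simp only [mul_assoc, ← T_add]
      ring_nf
    rw [bressoudPoly₁, show 2 * (n + 1) = 2 * n + 1 + 1 by ring, progSum_succ' two_ne_zero,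
      progSum_succ two_ne_zero, hZ, zero_add, bressoudPoly₂, mul_progSum]
    congr 1
    · exact progSum_congr (fun _ => rfl) (by push_cast; ring)
    · refine progSum_congr (fun j => ?_) (by push_cast; ring)
      simp only [mul_left_comm _ ((-1 : LaurentPolynomial ℤ) ^ _), mul_assoc, ← T_add]
      push_cast
      ring_nf
  succ_right n := by
    have hY : progSum (2 * n + 1) (fun j => (-1) ^ j.natAbs * T (bressoudExp j + 2 * j)
        * T (↑(2 * n + 1) + 1 - (↑(n + 1) - 1 - 2 * j))) (↑(n + 1) - 1 - 1) 2
        = -(T (n + 1) * bressoudPoly₂ n) := by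
      rw [progSum_reflect (-1) (c' := n) (by push_cast; ring), bressoudPoly₂, mul_progSum,
        ← progSum_neg]
      refine progSum_congr (fun i => ?_) rfl
      rw [neg_one_pow_natAbs_sub_of_odd (by decide), bressoudExp_neg_one_sub]
      simp only [mul_left_comm _ ((-1 : LaurentPolynomial ℤ) ^ _), mul_assoc, ← T_add]
      push_cast
      ring_nf
    have hX : progSum (2 * n + 2) (fun j => (-1) ^ j.natAbs * T (bressoudExp j + 2 * j)
        * T (↑(n + 1) - 2 * j)) ↑(n + 1) 2 = T (n + 1) * bressoudPoly₁ (n + 1) := by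
      rw [bressoudPoly₁, mul_progSum]
      refine progSum_congr (fun j => ?_) rfl
      simp only [mul_left_comm _ ((-1 : LaurentPolynomial ℤ) ^ _), mul_assoc, ← T_add]
      push_cast
      ring_nf
    have hB : progSum (2 * n + 1) (fun j => (-1) ^ j.natAbs * T (bressoudExp j + 2 * j))
        (↑(n + 1) - 1) 2 = bressoudPoly₂ n :=
      progSum_congr (fun _ => rfl) (by push_cast; ring)
    rw [bressoudPoly₂, show 2 * (n + 1) + 1 = 2 * n + 1 + 1 + 1 by ring, progSum_succ two_ne_zero,
      progSum_succ' (c := ↑(n + 1) - 1) two_ne_zero, hX, hY, hB]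
    ring

lemma sum_range_eq_rrPoly₁ (n : ℕ) :
    ∑ k ∈ Finset.range (n + 1), q ^ (k ^ 2) * qb n k = rrPoly₁ n := by
  rw [rrPoly₁, progSum, finsum_eq_sum_of_support_subset (s := (Finset.range (n + 1)).map
    Nat.castEmbedding), Finset.sum_map]
  · refine Finset.sum_congr rfl fun k _ => ?_
    simp [q, T_pow]
  · intro k hk
    have hk' : 0 ≤ k ∧ k ≤ n := by
      by_contra h
      exact hk (mul_eq_zero_of_right _ (qb_eq_zero (by omega)))
    simp only [Finset.coe_map, Set.mem_image, Finset.mem_coe, Finset.mem_range]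
    exact ⟨k.toNat, by omega, by simp [hk'.1]⟩

theorem stmt8 (n : ℕ) :
    ∑ k ∈ Finset.range (n + 1), q ^ (k ^ 2) * qb n k
      = ∑ᶠ j : ℤ, (-1 : LaurentPolynomial ℤ) ^ j.natAbs * T (j * (5 * j - 1) / 2) *
          qb (2 * n) ((n : ℤ) - 2 * j) := by
  rw [sum_range_eq_rrPoly₁]
  exact congrFun (isRRPair_rrPoly.unique isRRPair_bressoudPoly).1 n
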